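/- Let L > 0, let D₁₁, D₂₂ : ℝ → ℝ be C¹, L-periodic, with positive lower bounds, and let w₁, w₂ : ℝ → ℝ be C², L-periodic cell functions satisfying (D₂₂ w₁′)′ = 0 and (D₂₂(1 + w₂′))′ = 0 on ℝ. Let g : ℝ → ℝ be C¹, let U₀ : ℝ² × ℝ → ℝ be C³ (a function of (X₁,X₂,T), independent of the fast variable), let U₁(X,Y₂,T) := w₁(Y₂)·(∂U₀/∂X₁ + g(U₀)) + w₂(Y₂)·∂U₀/∂X₂, let U₂ : ℝ² × ℝ × ℝ → ℝ be C² and L-periodic in the fast variable Y₂, and let F : ℝ² × ℝ × ℝ → ℝ be continuous and L-periodic in Y₂. Assume that for all (X, Y₂, T) the order-ε⁰ equation holds: ∂U₀/∂T − [D₁₁(Y₂) ∂²U₀/∂X₁² + D₂₂(Y₂) ∂²U₀/∂X₂² + ∂/∂X₂(D₂₂(Y₂) ∂U₁/∂Y₂) + ∂/∂Y₂(D₂₂(Y₂) ∂U₁/∂X₂) + ∂/∂Y₂(D₂₂(Y₂) ∂U₂/∂Y₂) + ∂/∂X₁(D₁₁(Y₂) g(U₀))] = F(X,Y₂,T). Define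 the effective coefficients 𝔻₁₁ := (1/L)∫₀^L D₁₁(Y₂) dY₂, 𝔻₂₁ := (1/L)∫₀^L D₂₂(Y₂) w₁′(Y₂) dY₂, 𝔻₂₂ := (1/L)∫₀^L D₂₂(Y₂)(1 + w₂′(Y₂)) dY₂. Then for all (X,T) the upscaled equation holds: ∂U₀/∂T − ∂/∂X₁[𝔻₁₁(∂U₀/∂X₁ + g(U₀))] − ∂/∂X₂[𝔻₂₁(∂U₀/∂X₁ + g(U₀)) + 𝔻₂₂ ∂U₀/∂X₂] = (1/L)∫₀^L F(X,Y₂,T) dY₂. -/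

import Mathlib

/-!
Fix `(X₁, X₂, T)`. Since `U₁` is a sum of products of a function of `Y₂` with a function of
`X₂`, the order-`ε⁰` equation says that `F(·)` equals `∂U₀/∂T` minus a combination of `D₁₁`,
`D₂₂ w₁′` and `D₂₂ (1 + w₂′)` whose coefficients do not depend on `Y₂`, minus the
`Y₂`-derivative of the flux
`J = D₂₂ (∂U₁/∂X₂ + ∂U₂/∂Y₂)`. The flux is `L`-periodic, so its derivative has zero mean over a
period, and averaging the remaining terms produces exactly the effective coefficients.
-/

open Function intervalIntegral

theorem ContDiff.deriv {𝕜 E F : Type*} [NontriviallyNormedField 𝕜]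
    [NormedAddCommGroup E] [NormedSpace 𝕜 E] [NormedAddCommGroup F] [NormedSpace 𝕜 F]
    {m n : WithTop ℕ∞} {f : E → 𝕜 → F} {g : E → 𝕜}
    (hf : ContDiff 𝕜 m (uncurry f)) (hg : ContDiff 𝕜 n g) (hnm : n + 1 ≤ m) :
    ContDiff 𝕜 n fun x => deriv (f x) (g x) :=
  hf.fderiv_apply hg contDiff_const hnm

theorem Function.Periodic.deriv {𝕜 F : Type*} [NontriviallyNormedField 𝕜]
    [NormedAddCommGroup F] [NormedSpace 𝕜 F] {f : 𝕜 → F} {c : 𝕜}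
    (hf : Periodic f c) : Periodic (deriv f) c := fun x => by
  rw [← deriv_comp_add_const, show (fun y => f (y + c)) = f from funext hf]

theorem intervalIntegral_sub_deriv_of_eq {E : Type*} [NormedAddCommGroup E]
    [NormedSpace ℝ E] [CompleteSpace E] {φ f : ℝ → E} {a b : ℝ}
    (hf : ContDiff ℝ 1 f) (hfab : f a = f b)
    (hφ : IntervalIntegrable φ MeasureTheory.volume a b) :
    ∫ y in a..b, (φ y - deriv f y) = ∫ y in a..b, φ y := by
  have hf' := (hf.continuous_deriv le_rfl).intervalIntegrable (μ := MeasureTheory.volume) a b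
  rw [integral_sub hφ hf', integral_deriv_eq_sub (fun x _ => hf.differentiable one_ne_zero x) hf',
    hfab, sub_self, sub_zero]

theorem average_eq_of_eq_sub_deriv_periodic {L ut K B A : ℝ} {a₁ a₂ a₃ J F : ℝ → ℝ}
    (hL : L ≠ 0) (ha₁ : Continuous a₁) (ha₂ : Continuous a₂) (ha₃ : Continuous a₃)
    (hJ : ContDiff ℝ 1 J) (hJper : Periodic J L)
    (hF : ∀ y, F y = ut - (K * a₁ y + B * a₂ y + A * a₃ y) - deriv J y) :
    (1 / L) * ∫ y in (0:ℝ)..L, F y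
      = ut - (K * ((1 / L) * ∫ y in (0:ℝ)..L, a₁ y) + B * ((1 / L) * ∫ y in (0:ℝ)..L, a₂ y)
          + A * ((1 / L) * ∫ y in (0:ℝ)..L, a₃ y)) := by
  have hint : ∀ {a : ℝ → ℝ}, Continuous a → IntervalIntegrable a MeasureTheory.volume 0 L :=
    fun ha => ha.intervalIntegrable _ _
  have hJ0L : J 0 = J L := by simpa using (hJper 0).symm
  simp only [hF]
  rw [intervalIntegral_sub_deriv_of_eq hJ hJ0L (hint ?_), integral_sub (hint ?_) (hint ?_),
    integral_add (hint ?_) (hint ?_), integral_add (hint ?_) (hint ?_),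
    integral_const_mul, integral_const_mul, integral_const_mul, integral_const, smul_eq_mul]
  · field_simp
    ring
  all_goals fun_prop

/-- `u₁`, `u₂` are the slices of `U₀` in `X₁`, `X₂`; `V s z` is `U₁` at `X₂ = s`, `Y₂ = z`;
`v` is the slice of `U₂` in `Y₂`; `q = ∂U₀/∂X₁ + g(U₀)` as a function of `X₂`. -/
theorem source_eq_of_order_zero_equation
    {D₁₁ D₂₂ w₁ w₂ g u₁ u₂ q v : ℝ → ℝ} {V : ℝ → ℝ → ℝ} {x₁ x₂ y ut f : ℝ}
    (hD₂₂ : DifferentiableAt ℝ D₂₂ y) (hw₁ : DifferentiableAt ℝ w₁ y)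
    (hw₂ : DifferentiableAt ℝ w₂ y) (hv : DifferentiableAt ℝ (deriv v) y)
    (hu₁ : DifferentiableAt ℝ (deriv u₁) x₁) (hgu₁ : DifferentiableAt ℝ (fun s => g (u₁ s)) x₁)
    (hq : DifferentiableAt ℝ q x₂) (hu₂ : DifferentiableAt ℝ (deriv u₂) x₂)
    (hV : ∀ s z, V s z = w₁ z * q s + w₂ z * deriv u₂ s)
    (heq : ut - (D₁₁ y * iteratedDeriv 2 u₁ x₁ + D₂₂ y * iteratedDeriv 2 u₂ x₂
            + deriv (fun s => D₂₂ y * deriv (V s) y) x₂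
            + deriv (fun z => D₂₂ z * deriv (fun s => V s z) x₂) y
            + deriv (fun z => D₂₂ z * deriv v z) y
            + deriv (fun s => D₁₁ y * g (u₁ s)) x₁) = f) :
    f = ut - (deriv (fun s => deriv u₁ s + g (u₁ s)) x₁ * D₁₁ y
        + deriv q x₂ * (D₂₂ y * deriv w₁ y)
        + deriv (deriv u₂) x₂ * (D₂₂ y * (1 + deriv w₂ y)))
      - deriv (fun z => D₂₂ z * (w₁ z * deriv q x₂ + w₂ z * deriv (deriv u₂) x₂ + deriv v z))
          y := by
  set B := deriv q x₂
  set A := deriv (deriv u₂) x₂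
  have hq' := hq.hasDerivAt
  have hu₂' := hu₂.hasDerivAt
  have hVy : ∀ s, deriv (V s) y = deriv w₁ y * q s + deriv w₂ y * deriv u₂ s := fun s => by
    rw [show V s = fun z => w₁ z * q s + w₂ z * deriv u₂ s from funext (hV s)]
    exact ((hw₁.hasDerivAt.mul_const _).add (hw₂.hasDerivAt.mul_const _)).deriv
  have hVx : ∀ z, deriv (fun s => V s z) x₂ = w₁ z * B + w₂ z * A := fun z => by
    simp only [hV]
    exact ((hq'.const_mul _).add (hu₂'.const_mul _)).deriv
  have hcross : deriv (fun s => D₂₂ y * deriv (V s) y) x₂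
      = D₂₂ y * (deriv w₁ y * B + deriv w₂ y * A) := by
    simp only [hVy]
    exact (((hq'.const_mul _).add (hu₂'.const_mul _)).const_mul _).deriv
  have hflux : deriv (fun z => D₂₂ z * deriv (fun s => V s z) x₂) y
      + deriv (fun z => D₂₂ z * deriv v z) y
      = deriv (fun z => D₂₂ z * (w₁ z * B + w₂ z * A + deriv v z)) y := by
    simp only [hVx, mul_add _ _ (deriv v _)]
    rw [deriv_fun_add (by fun_prop) (by fun_prop)]
  simp only [iteratedDeriv_succ, iteratedDeriv_zero] at heq
  rw [← heq, deriv_fun_add hu₁ hgu₁, hcross, ← hflux, deriv_const_mul_field']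
  ring

theorem average_eq_of_order_zero_equation
    {D₁₁ D₂₂ w₁ w₂ g u₁ u₂ q v F : ℝ → ℝ} {V : ℝ → ℝ → ℝ} {L x₁ x₂ ut : ℝ} (hL : L ≠ 0)
    (hD₁₁ : Continuous D₁₁) (hD₂₂ : ContDiff ℝ 1 D₂₂) (hw₁ : ContDiff ℝ 2 w₁)
    (hw₂ : ContDiff ℝ 2 w₂) (hv : ContDiff ℝ 2 v)
    (hD₂₂_per : Periodic D₂₂ L) (hw₁_per : Periodic w₁ L) (hw₂_per : Periodic w₂ L)
    (hv_per : Periodic v L)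
    (hu₁ : DifferentiableAt ℝ (deriv u₁) x₁) (hgu₁ : DifferentiableAt ℝ (fun s => g (u₁ s)) x₁)
    (hq : DifferentiableAt ℝ q x₂) (hu₂ : DifferentiableAt ℝ (deriv u₂) x₂)
    (hV : ∀ s z, V s z = w₁ z * q s + w₂ z * deriv u₂ s)
    (heq : ∀ y, ut - (D₁₁ y * iteratedDeriv 2 u₁ x₁ + D₂₂ y * iteratedDeriv 2 u₂ x₂
            + deriv (fun s => D₂₂ y * deriv (V s) y) x₂
            + deriv (fun z => D₂₂ z * deriv (fun s => V s z) x₂) y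
            + deriv (fun z => D₂₂ z * deriv v z) y
            + deriv (fun s => D₁₁ y * g (u₁ s)) x₁) = F y) :
    (1 / L) * ∫ y in (0:ℝ)..L, F y
      = ut - (deriv (fun s => deriv u₁ s + g (u₁ s)) x₁ * ((1 / L) * ∫ y in (0:ℝ)..L, D₁₁ y)
        + deriv q x₂ * ((1 / L) * ∫ y in (0:ℝ)..L, D₂₂ y * deriv w₁ y)
        + deriv (deriv u₂) x₂ * ((1 / L) * ∫ y in (0:ℝ)..L, D₂₂ y * (1 + deriv w₂ y))) := by
  have hv' : ContDiff ℝ 1 (deriv v) := hv.deriv'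
  have hw₁' := hw₁.continuous_deriv one_le_two
  have hw₂' := hw₂.continuous_deriv one_le_two
  have hw₁C1 := hw₁.of_le one_le_two
  have hw₂C1 := hw₂.of_le one_le_two
  refine average_eq_of_eq_sub_deriv_periodic hL hD₁₁ (by fun_prop) (by fun_prop) (by fun_prop)
    (fun z => by simp only [hD₂₂_per z, hw₁_per z, hw₂_per z, hv_per.deriv z]) fun y =>
    source_eq_of_order_zero_equation (hD₂₂.differentiable one_ne_zero y)
      (hw₁.differentiable two_ne_zero y) (hw₂.differentiable two_ne_zero y)
      (hv'.differentiable one_ne_zero y) hu₁ hgu₁ hq hu₂ hV (heq y)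

theorem upscaled_finite_thickness_membrane_equation_general
    (L : ℝ) (hL : 0 < L)
    (D₁₁ D₂₂ : ℝ → ℝ)
    (hD₁₁ : ContDiff ℝ 1 D₁₁) (hD₂₂ : ContDiff ℝ 1 D₂₂)
    (hD₂₂_per : Function.Periodic D₂₂ L)
    (w₁ w₂ : ℝ → ℝ) (hw₁ : ContDiff ℝ 2 w₁) (hw₂ : ContDiff ℝ 2 w₂)
    (hw₁_per : Function.Periodic w₁ L) (hw₂_per : Function.Periodic w₂ L)
    (g : ℝ → ℝ) (hg : ContDiff ℝ 1 g)
    (U₀ : ℝ → ℝ → ℝ → ℝ)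
    (hU₀ : ContDiff ℝ 3 fun p : ℝ × ℝ × ℝ => U₀ p.1 p.2.1 p.2.2)
    (U₁ : ℝ → ℝ → ℝ → ℝ → ℝ)
    (hU₁ : ∀ X₁ X₂ Y₂ T : ℝ,
      U₁ X₁ X₂ Y₂ T
        = w₁ Y₂ * (deriv (fun s => U₀ s X₂ T) X₁ + g (U₀ X₁ X₂ T))
          + w₂ Y₂ * deriv (fun s => U₀ X₁ s T) X₂)
    (U₂ : ℝ → ℝ → ℝ → ℝ → ℝ)
    (hU₂ : ContDiff ℝ 2 fun p : ℝ × ℝ × ℝ × ℝ => U₂ p.1 p.2.1 p.2.2.1 p.2.2.2)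
    (hU₂_per : ∀ X₁ X₂ T : ℝ, Function.Periodic (fun y => U₂ X₁ X₂ y T) L)
    (F : ℝ → ℝ → ℝ → ℝ → ℝ)
    -- the order-ε⁰ equation of the two-scale expansion
    (heps0 : ∀ X₁ X₂ Y₂ T : ℝ,
      deriv (fun s => U₀ X₁ X₂ s) T
        - (D₁₁ Y₂ * iteratedDeriv 2 (fun s => U₀ s X₂ T) X₁
            + D₂₂ Y₂ * iteratedDeriv 2 (fun s => U₀ X₁ s T) X₂
            + deriv (fun s => D₂₂ Y₂ * deriv (fun y => U₁ X₁ s y T) Y₂) X₂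
            + deriv (fun y => D₂₂ y * deriv (fun s => U₁ X₁ s y T) X₂) Y₂
            + deriv (fun y => D₂₂ y * deriv (fun z => U₂ X₁ X₂ z T) y) Y₂
            + deriv (fun s => D₁₁ Y₂ * g (U₀ s X₂ T)) X₁)
      = F X₁ X₂ Y₂ T)
    -- the effective transport coefficients
    (𝔻₁₁ 𝔻₂₁ 𝔻₂₂ : ℝ)
    (h𝔻₁₁ : 𝔻₁₁ = (1 / L) * ∫ y in (0:ℝ)..L, D₁₁ y)
    (h𝔻₂₁ : 𝔻₂₁ = (1 / L) * ∫ y in (0:ℝ)..L, D₂₂ y * deriv w₁ y)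
    (h𝔻₂₂ : 𝔻₂₂ = (1 / L) * ∫ y in (0:ℝ)..L, D₂₂ y * (1 + deriv w₂ y)) :
    ∀ X₁ X₂ T : ℝ,
      deriv (fun s => U₀ X₁ X₂ s) T
        - deriv (fun s => 𝔻₁₁ * (deriv (fun r => U₀ r X₂ T) s + g (U₀ s X₂ T))) X₁
        - deriv (fun s =>
            𝔻₂₁ * (deriv (fun r => U₀ r s T) X₁ + g (U₀ X₁ s T))
              + 𝔻₂₂ * deriv (fun r => U₀ X₁ r T) s) X₂
      = (1 / L) * ∫ y in (0:ℝ)..L, F X₁ X₂ y T := by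
  intro X₁ X₂ T
  set u₁ : ℝ → ℝ := fun r => U₀ r X₂ T
  set u₂ : ℝ → ℝ := fun r => U₀ X₁ r T
  set q : ℝ → ℝ := fun s => deriv (fun r => U₀ r s T) X₁ + g (U₀ X₁ s T)
  have hu₁ : ContDiff ℝ 3 u₁ := hU₀.comp (by fun_prop : ContDiff ℝ 3 fun r => (r, X₂, T))
  have hu₂ : ContDiff ℝ 3 u₂ := hU₀.comp (by fun_prop : ContDiff ℝ 3 fun r => (X₁, r, T))
  have hu₁' : ContDiff ℝ 2 (deriv u₁) := hu₁.deriv'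
  have hu₂' : ContDiff ℝ 2 (deriv u₂) := hu₂.deriv'
  have hq : ContDiff ℝ 1 q :=
    .add (ContDiff.deriv (f := fun s r => U₀ r s T) (m := 3)
        (hU₀.comp (by fun_prop : ContDiff ℝ 3 fun p : ℝ × ℝ => (p.2, p.1, T))) contDiff_const
        (by norm_num))
      (hg.comp (hu₂.of_le (by norm_num)))
  have havg := average_eq_of_order_zero_equation (V := fun s z => U₁ X₁ s z T) hL.ne'
    hD₁₁.continuous hD₂₂ hw₁ hw₂ (hU₂.comp (by fun_prop : ContDiff ℝ 2 fun z => (X₁, X₂, z, T)))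
    hD₂₂_per hw₁_per hw₂_per (hU₂_per X₁ X₂ T) (hu₁'.differentiable two_ne_zero X₁)
    ((hg.comp (hu₁.of_le (by norm_num))).differentiable one_ne_zero X₁)
    (hq.differentiable one_ne_zero X₂) (hu₂'.differentiable two_ne_zero X₂)
    (fun s z => hU₁ X₁ s z T) (heps0 X₁ X₂ · T)
  have hX₂flux : HasDerivAt (fun s => 𝔻₂₁ * q s + 𝔻₂₂ * deriv u₂ s)
      (𝔻₂₁ * deriv q X₂ + 𝔻₂₂ * deriv (deriv u₂) X₂) X₂ :=
    ((hq.differentiable one_ne_zero X₂).hasDerivAt.const_mul 𝔻₂₁).add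
      ((hu₂'.differentiable two_ne_zero X₂).hasDerivAt.const_mul 𝔻₂₂)
  rw [deriv_const_mul_field', hX₂flux.deriv, havg, h𝔻₁₁, h𝔻₂₁, h𝔻₂₂]
  ring

/-- Averaging the order-`ε⁰` equation of the two-scale expansion over one
period of the fast variable `Y₂` yields the upscaled finite-thickness membrane equation
`∂U₀/∂T − ∂/∂X₁[𝔻₁₁(∂U₀/∂X₁ + g(U₀))] − ∂/∂X₂[𝔻₂₁(∂U₀/∂X₁ + g(U₀)) + 𝔻₂₂ ∂U₀/∂X₂]
  = (1/L)∫₀^L F dY₂`,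
with effective coefficients `𝔻₁₁ = (1/L)∫₀^L D₁₁`, `𝔻₂₁ = (1/L)∫₀^L D₂₂ w₁′`,
`𝔻₂₂ = (1/L)∫₀^L D₂₂(1 + w₂′)`. -/
theorem upscaled_finite_thickness_membrane_equation
    (L : ℝ) (hL : 0 < L)
    (c₁ c₂ : ℝ) (hc₁ : 0 < c₁) (hc₂ : 0 < c₂)
    (D₁₁ D₂₂ : ℝ → ℝ)
    (hD₁₁ : ContDiff ℝ 1 D₁₁) (hD₂₂ : ContDiff ℝ 1 D₂₂)
    (hD₁₁_per : Function.Periodic D₁₁ L) (hD₂₂_per : Function.Periodic D₂₂ L)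
    (hD₁₁_pos : ∀ y : ℝ, c₁ ≤ D₁₁ y) (hD₂₂_pos : ∀ y : ℝ, c₂ ≤ D₂₂ y)
    (w₁ w₂ : ℝ → ℝ) (hw₁ : ContDiff ℝ 2 w₁) (hw₂ : ContDiff ℝ 2 w₂)
    (hw₁_per : Function.Periodic w₁ L) (hw₂_per : Function.Periodic w₂ L)
    (hcell₁ : ∀ y : ℝ, deriv (fun z => D₂₂ z * deriv w₁ z) y = 0)
    (hcell₂ : ∀ y : ℝ, deriv (fun z => D₂₂ z * (1 + deriv w₂ z)) y = 0)
    (g : ℝ → ℝ) (hg : ContDiff ℝ 1 g)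
    (U₀ : ℝ → ℝ → ℝ → ℝ)
    (hU₀ : ContDiff ℝ 3 fun p : ℝ × ℝ × ℝ => U₀ p.1 p.2.1 p.2.2)
    (U₁ : ℝ → ℝ → ℝ → ℝ → ℝ)
    (hU₁ : ∀ X₁ X₂ Y₂ T : ℝ,
      U₁ X₁ X₂ Y₂ T
        = w₁ Y₂ * (deriv (fun s => U₀ s X₂ T) X₁ + g (U₀ X₁ X₂ T))
          + w₂ Y₂ * deriv (fun s => U₀ X₁ s T) X₂)
    (U₂ : ℝ → ℝ → ℝ → ℝ → ℝ)
    (hU₂ : ContDiff ℝ 2 fun p : ℝ × ℝ × ℝ × ℝ => U₂ p.1 p.2.1 p.2.2.1 p.2.2.2)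
    (hU₂_per : ∀ X₁ X₂ T : ℝ, Function.Periodic (fun y => U₂ X₁ X₂ y T) L)
    (F : ℝ → ℝ → ℝ → ℝ → ℝ)
    (hF : Continuous fun p : ℝ × ℝ × ℝ × ℝ => F p.1 p.2.1 p.2.2.1 p.2.2.2)
    (hF_per : ∀ X₁ X₂ T : ℝ, Function.Periodic (fun y => F X₁ X₂ y T) L)
    -- the order-ε⁰ equation of the two-scale expansion
    (heps0 : ∀ X₁ X₂ Y₂ T : ℝ,
      deriv (fun s => U₀ X₁ X₂ s) T
        - (D₁₁ Y₂ * iteratedDeriv 2 (fun s => U₀ s X₂ T) X₁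
            + D₂₂ Y₂ * iteratedDeriv 2 (fun s => U₀ X₁ s T) X₂
            + deriv (fun s => D₂₂ Y₂ * deriv (fun y => U₁ X₁ s y T) Y₂) X₂
            + deriv (fun y => D₂₂ y * deriv (fun s => U₁ X₁ s y T) X₂) Y₂
            + deriv (fun y => D₂₂ y * deriv (fun z => U₂ X₁ X₂ z T) y) Y₂
            + deriv (fun s => D₁₁ Y₂ * g (U₀ s X₂ T)) X₁)
      = F X₁ X₂ Y₂ T)
    -- the effective transport coefficients
    (𝔻₁₁ 𝔻₂₁ 𝔻₂₂ : ℝ)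
    (h𝔻₁₁ : 𝔻₁₁ = (1 / L) * ∫ y in (0:ℝ)..L, D₁₁ y)
    (h𝔻₂₁ : 𝔻₂₁ = (1 / L) * ∫ y in (0:ℝ)..L, D₂₂ y * deriv w₁ y)
    (h𝔻₂₂ : 𝔻₂₂ = (1 / L) * ∫ y in (0:ℝ)..L, D₂₂ y * (1 + deriv w₂ y)) :
    ∀ X₁ X₂ T : ℝ,
      deriv (fun s => U₀ X₁ X₂ s) T
        - deriv (fun s => 𝔻₁₁ * (deriv (fun r => U₀ r X₂ T) s + g (U₀ s X₂ T))) X₁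
        - deriv (fun s =>
            𝔻₂₁ * (deriv (fun r => U₀ r s T) X₁ + g (U₀ X₁ s T))
              + 𝔻₂₂ * deriv (fun r => U₀ X₁ r T) s) X₂
      = (1 / L) * ∫ y in (0:ℝ)..L, F X₁ X₂ y T :=
  upscaled_finite_thickness_membrane_equation_general L hL D₁₁ D₂₂ hD₁₁ hD₂₂ hD₂₂_per w₁ w₂ hw₁ hw₂
    hw₁_per hw₂_per g hg U₀ hU₀ U₁ hU₁ U₂ hU₂ hU₂_per F heps0 𝔻₁₁ 𝔻₂₁ 𝔻₂₂ h𝔻₁₁ h𝔻₂₁ h𝔻₂₂
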